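/- Let K be a field and V a finite-dimensional K-vector space. Let φ be a K-algebra endomorphism of the exterior algebra Λ(V) such that φ maps the ideal generated by V into itself, and such that the induced linear endomorphism of V ≅ (augmentation ideal)/(augmentation ideal)² is bijective. Then φ is bijective. -/

import Mathlib

/-!
Let `J` be the image of `V`. Since `J` generates `Λ(V)`, left and right multiples of `J` agree,
so the ideal generated by `V` is `I = J · Λ(V)`, `Λ(V) = K ⊕ I`, `I ≤ J + I²`, and
`I ^ (dim V + 1) = 0` because `J ^ (dim V + 1) = Λ^(dim V + 1) V = 0`. The hypothesis on `φ₁`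
puts every element of `J` in `φ(I) + I²`, hence `I ≤ (range φ ∩ I) + I²`. Lifting along the
powers, `I^k ≤ (range φ ∩ I^k) + I^(k+1)` (the lifts lie in `I`, so their products land in
`I^(k+1)`), and nilpotency gives `I ≤ range φ`. So `φ` is onto, and a surjective endomorphism of
the finite-dimensional space `Λ(V)` is bijective.
-/

namespace Submodule

variable {R A : Type*} [CommSemiring R] [Semiring A] [Algebra R A]

section LiftingModSquare

variable {S : Subalgebra R A} {I : Submodule R A}

lemma pow_succ_le_inf_sup_pow_succ (h : I ≤ (Subalgebra.toSubmodule S ⊓ I) ⊔ I ^ 2) (k : ℕ) :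
    I ^ (k + 1) ≤ (Subalgebra.toSubmodule S ⊓ I ^ (k + 1)) ⊔ I ^ (k + 2) := by
  induction k with
  | zero => simpa using h
  | succ k ih =>
    set T := Subalgebra.toSubmodule S
    have hmul : (T ⊓ I ^ (k + 1)) * (T ⊓ I) ≤ T ⊓ I ^ (k + 2) :=
      le_inf ((mul_le_mul' inf_le_left inf_le_left).trans S.isIdempotentElem_toSubmodule.le)
        ((mul_le_mul' inf_le_right inf_le_right).trans (pow_succ I (k + 1)).ge)
    have hsq : (T ⊓ I ^ (k + 1)) * I ^ 2 ≤ I ^ (k + 3) :=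
      (mul_le_mul_left inf_le_right _).trans (pow_add I (k + 1) 2).ge
    calc I ^ (k + 2) = I ^ (k + 1) * I := pow_succ I (k + 1)
      _ ≤ ((T ⊓ I ^ (k + 1)) ⊔ I ^ (k + 2)) * I := mul_le_mul_left ih I
      _ = (T ⊓ I ^ (k + 1)) * I ⊔ I ^ (k + 3) := by rw [sup_mul, ← pow_succ]
      _ ≤ (T ⊓ I ^ (k + 1)) * ((T ⊓ I) ⊔ I ^ 2) ⊔ I ^ (k + 3) := by gcongr
      _ ≤ (T ⊓ I ^ (k + 2)) ⊔ I ^ (k + 3) := by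
        rw [mul_sup]
        exact sup_le (sup_le (le_sup_of_le_left hmul) (le_sup_of_le_right hsq)) le_sup_right

lemma le_sup_pow_succ (h : I ≤ (Subalgebra.toSubmodule S ⊓ I) ⊔ I ^ 2) (k : ℕ) :
    I ≤ Subalgebra.toSubmodule S ⊔ I ^ (k + 1) := by
  induction k with
  | zero => simp
  | succ k ih =>
    refine ih.trans (sup_le le_sup_left ((pow_succ_le_inf_sup_pow_succ h k).trans ?_))
    exact sup_le_sup_right inf_le_left _

theorem le_toSubmodule_of_isNilpotent (hI : IsNilpotent I)
    (h : I ≤ (Subalgebra.toSubmodule S ⊓ I) ⊔ I ^ 2) : I ≤ Subalgebra.toSubmodule S := by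
  obtain ⟨n, hn⟩ := hI
  simpa [pow_succ, hn, zero_eq_bot] using le_sup_pow_succ h n

end LiftingModSquare

section GeneratingSubmodule

variable {J : Submodule R A}

lemma top_mul_eq_mul_top_of_iSup_pow_eq_top (h : ⨆ i, J ^ i = ⊤) : ⊤ * J = J * ⊤ := by
  rw [← h, iSup_mul, mul_iSup]
  simp_rw [← pow_succ, ← pow_succ']

lemma one_sup_mul_top_of_iSup_pow_eq_top (h : ⨆ i, J ^ i = ⊤) : 1 ⊔ J * ⊤ = ⊤ := by
  refine top_le_iff.mp (h.ge.trans (iSup_le fun i => ?_))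
  cases i with
  | zero => exact le_sup_of_le_left (pow_zero J).le
  | succ i => exact le_sup_of_le_right ((pow_succ' J i).le.trans (mul_le_mul_right le_top J))

lemma mul_top_le_sup_sq_of_iSup_pow_eq_top (h : ⨆ i, J ^ i = ⊤) :
    J * ⊤ ≤ J ⊔ (J * ⊤) ^ 2 := by
  calc J * ⊤ = J * (1 ⊔ J * ⊤) := by rw [one_sup_mul_top_of_iSup_pow_eq_top h]
    _ = J ⊔ J * (J * ⊤) := by rw [mul_sup, mul_one]
    _ ≤ J ⊔ (J * ⊤) ^ 2 := by
      rw [pow_two]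
      have hJ : J ≤ J * ⊤ := by simpa using mul_le_mul_right (le_top : (1 : Submodule R A) ≤ ⊤) J
      gcongr

lemma top_mul_mul_top_eq_mul_top (h : ⨆ i, J ^ i = ⊤) : ⊤ * J * ⊤ = J * ⊤ := by
  rw [top_mul_eq_mul_top_of_iSup_pow_eq_top h, mul_assoc]
  congr 1
  exact top_le_iff.mp (by simpa using mul_le_mul_left (le_top : (1 : Submodule R A) ≤ ⊤) ⊤)

lemma mul_top_pow_le (hJ : ⊤ * J = J * ⊤) (k : ℕ) : (J * ⊤) ^ k ≤ J ^ k * ⊤ := by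
  induction k with
  | zero => simp
  | succ k ih =>
    calc (J * ⊤) ^ (k + 1) = (J * ⊤) ^ k * (J * ⊤) := pow_succ _ k
      _ ≤ J ^ k * ⊤ * (J * ⊤) := mul_le_mul_left ih _
      _ = J ^ k * (⊤ * J) * ⊤ := by simp only [mul_assoc]
      _ = J ^ (k + 1) * (⊤ * ⊤) := by rw [hJ, pow_succ]; simp only [mul_assoc]
      _ ≤ J ^ (k + 1) * ⊤ := mul_le_mul_right le_top _

lemma isNilpotent_mul_top (hJ : ⊤ * J = J * ⊤) (hnil : IsNilpotent J) : IsNilpotent (J * ⊤) := by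
  obtain ⟨n, hn⟩ := hnil
  refine ⟨n, le_bot_iff.mp ?_⟩
  simpa [hn, zero_eq_bot] using mul_top_pow_le hJ n

lemma fg_iSup_pow (hfg : J.FG) (hnil : IsNilpotent J) : (⨆ i, J ^ i).FG := by
  obtain ⟨n, hn⟩ := hnil
  have : ⨆ i, J ^ i = ⨆ i : Fin n, J ^ (i : ℕ) := by
    refine le_antisymm (iSup_le fun i => ?_) (iSup_le fun i => le_iSup (fun i : ℕ => J ^ i) i)
    by_cases hi : i < n
    · exact le_iSup_of_le ⟨i, hi⟩ le_rfl
    · simp [pow_eq_zero_of_le (not_lt.mp hi) hn, zero_eq_bot]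
  rw [this]
  exact fg_iSup _ fun i => hfg.pow _

end GeneratingSubmodule

end Submodule

namespace ExteriorAlgebra

open Submodule

section CommRing

variable {R M : Type*} [CommRing R] [AddCommGroup M] [Module R M]

lemma iSup_pow_range_ι_eq_top : ⨆ i, LinearMap.range (ι R : M →ₗ[R] ExteriorAlgebra R M) ^ i = ⊤ :=
  CliffordAlgebra.iSup_ι_range_eq_top 0

lemma span_mul_ι_mul_eq_top_mul_range_ι_mul_top :
    span R {z : ExteriorAlgebra R M | ∃ x : ExteriorAlgebra R M, ∃ v : M,
      ∃ y : ExteriorAlgebra R M, z = x * ι R v * y} = ⊤ * LinearMap.range (ι R) * ⊤ := by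
  rw [← span_univ, ← span_eq (LinearMap.range (ι R)), span_mul_span, span_mul_span]
  congr 1
  ext z
  simp [Set.mem_mul, eq_comm]

end CommRing

section Field

variable {K V : Type*} [Field K] [AddCommGroup V] [Module K V] [FiniteDimensional K V]

lemma isNilpotent_range_ι : IsNilpotent (LinearMap.range (ι K : V →ₗ[K] ExteriorAlgebra K V)) := by
  refine ⟨Module.finrank K V + 1, ?_⟩
  rw [zero_eq_bot, ← finrank_eq_zero]
  show Module.finrank K (⋀[K]^(Module.finrank K V + 1) V) = 0
  rw [exteriorPower.finrank_eq]
  exact Nat.choose_eq_zero_of_lt (Nat.lt_succ_self _)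

instance instFiniteDimensional : FiniteDimensional K (ExteriorAlgebra K V) := by
  refine ⟨?_⟩
  rw [← iSup_pow_range_ι_eq_top]
  refine fg_iSup_pow ?_ isNilpotent_range_ι
  rw [LinearMap.range_eq_map]
  exact Module.Finite.fg_top.map _

end Field

end ExteriorAlgebra

open ExteriorAlgebra Submodule

/-- An algebra endomorphism of an exterior algebra on a finite-dimensional
space which preserves the (two-sided) ideal I generated by V and induces a
bijection on I/I² ≅ V is bijective. -/
theorem stmt_11 {K V : Type*} [Field K] [AddCommGroup V] [Module K V]
    [FiniteDimensional K V]
    (φ : ExteriorAlgebra K V →ₐ[K] ExteriorAlgebra K V)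
    (I : Submodule K (ExteriorAlgebra K V))
    (hI : I = Submodule.span K {z : ExteriorAlgebra K V |
      ∃ x : ExteriorAlgebra K V, ∃ v : V, ∃ y : ExteriorAlgebra K V,
        z = x * ExteriorAlgebra.ι K v * y})
    (hφI : ∀ x ∈ I, φ x ∈ I)
    (φ₁ : V →ₗ[K] V)
    (hφ₁ : ∀ v : V,
      φ (ExteriorAlgebra.ι K v) - ExteriorAlgebra.ι K (φ₁ v) ∈ I * I)
    (hbij : Function.Bijective φ₁) :
    Function.Bijective φ := by
  set J := LinearMap.range (ι K : V →ₗ[K] ExteriorAlgebra K V)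
  have hgen : ⨆ i, J ^ i = ⊤ := iSup_pow_range_ι_eq_top
  rw [span_mul_ι_mul_eq_top_mul_range_ι_mul_top, top_mul_mul_top_eq_mul_top hgen] at hI
  subst hI
  have hJ : J ≤ (Subalgebra.toSubmodule φ.range ⊓ J * ⊤) ⊔ (J * ⊤) ^ 2 := by
    rintro _ ⟨w, rfl⟩
    obtain ⟨v, rfl⟩ := hbij.2 w
    have hv : ι K v ∈ J * ⊤ := by
      simpa using mul_mem_mul (LinearMap.mem_range_self (ι K) v) (mem_top (x := 1))
    rw [← sub_sub_cancel (φ (ι K v)) (ι K (φ₁ v))]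
    exact sub_mem_sup ⟨φ.mem_range_self _, hφI _ hv⟩ (pow_two (J * ⊤) ▸ hφ₁ v)
  have hrange : J * ⊤ ≤ Subalgebra.toSubmodule φ.range :=
    le_toSubmodule_of_isNilpotent
      (isNilpotent_mul_top (top_mul_eq_mul_top_of_iSup_pow_eq_top hgen) isNilpotent_range_ι)
      ((mul_top_le_sup_sq_of_iSup_pow_eq_top hgen).trans (sup_le hJ le_sup_right))
  have hsurj : Function.Surjective φ := by
    rw [← AlgHom.range_eq_top, ← Algebra.toSubmodule_eq_top, eq_top_iff,
      ← one_sup_mul_top_of_iSup_pow_eq_top hgen]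
    exact sup_le (one_le.mpr φ.range.one_mem) hrange
  exact ⟨φ.toLinearMap.injective_iff_surjective.mpr hsurj, hsurj⟩
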